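/- A nonempty second-countable space X is a continuous open image of a π-space if and only if X is a continuous open image of a space that has a Lusin π-base. -/

import Mathlib

open Set Topology

namespace PiSpacePaper

/-- The restriction `p↾n` of `p : ℕ → ℕ`, as a list of length `n`. -/
def restrictSeq (p : ℕ → ℕ) (n : ℕ) : List ℕ := (List.range n).map p

/-- The basic clopen set `S_a` of the Baire space. -/
def cyl (a : List ℕ) : Set (ℕ → ℕ) := {p | restrictSeq p a.length = a}

/-- The fruit `⋂ n, V (p↾n)` of a branch `p` in a Souslin scheme `V`. -/
def fruit {X : Type*} (V : List ℕ → Set X) (p : ℕ → ℕ) : Set X :=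
  ⋂ n : ℕ, V (restrictSeq p n)

/-- A Souslin scheme `V` covers the set `s`. -/
def Covers {X : Type*} (V : List ℕ → Set X) (s : Set X) : Prop :=
  V [] = s ∧ ∀ a : List ℕ, V a = ⋃ n : ℕ, V (a ++ [n])

/-- A Souslin scheme `V` partitions the set `s`. -/
def Partitions {X : Type*} (V : List ℕ → Set X) (s : Set X) : Prop :=
  Covers V s ∧ ∀ (a : List ℕ) (n m : ℕ), n ≠ m → V (a ++ [n]) ∩ V (a ++ [m]) = ∅

/-- A Souslin scheme is complete iff all fruits are nonempty. -/
def Complete {X : Type*} (V : List ℕ → Set X) : Prop :=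
  ∀ p : ℕ → ℕ, (fruit V p).Nonempty

/-- A Souslin scheme has strict branches iff every fruit is a singleton. -/
def StrictBranches {X : Type*} (V : List ℕ → Set X) : Prop :=
  ∀ p : ℕ → ℕ, ∃ x : X, fruit V p = {x}

/-- A Souslin scheme is open iff all its members are open sets. -/
def OpenScheme {X : Type*} [TopologicalSpace X] (V : List ℕ → Set X) : Prop :=
  ∀ a : List ℕ, IsOpen (V a)

/-- `flesh V = ⋃ a, V a`. -/
def flesh {X : Type*} (V : List ℕ → Set X) : Set X := ⋃ a : List ℕ, V a

/-- `branches V x = {q ∈ ℕ^ℕ : x ∈ fruit V q}`. -/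
def branches {X : Type*} (V : List ℕ → Set X) (x : X) : Set (ℕ → ℕ) :=
  {q | x ∈ fruit V q}

/-- A family `γ` of subsets is a π-net for a space: all members are nonempty and every
nonempty open set contains a member. -/
def IsPiNet {X : Type*} [TopologicalSpace X] (γ : Set (Set X)) : Prop :=
  (∀ G ∈ γ, G.Nonempty) ∧
  ∀ U : Set X, IsOpen U → U.Nonempty → ∃ G ∈ γ, G ⊆ U

/-- A family `γ` of subsets is a π-base for a space: all members are nonempty open sets
and every nonempty open set contains a member. -/
def IsPiBase {X : Type*} [TopologicalSpace X] (γ : Set (Set X)) : Prop :=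
  (∀ G ∈ γ, IsOpen G ∧ G.Nonempty) ∧
  ∀ U : Set X, IsOpen U → U.Nonempty → ∃ G ∈ γ, G ⊆ U

/-- A π-space: there is an open Souslin scheme that partitions the space, has strict
branches, and whose family of members is a π-base. -/
def IsPiSpace (X : Type*) [TopologicalSpace X] : Prop :=
  ∃ V : List ℕ → Set X, OpenScheme V ∧ Partitions V Set.univ ∧ StrictBranches V ∧
    IsPiBase {S : Set X | ∃ a : List ℕ, S = V a}

/-- A Lusin π-base for a space. -/
def IsLusinPiBase {X : Type*} [TopologicalSpace X] (V : List ℕ → Set X) : Prop :=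
  OpenScheme V ∧ Partitions V Set.univ ∧ StrictBranches V ∧
  ∀ (x : X) (U : Set X), IsOpen U → x ∈ U →
    ∃ (a : List ℕ) (n : ℕ), x ∈ V a ∧ (⋃ i : ℕ, ⋃ _ : n ≤ i, V (a ++ [i])) ⊆ U

/-- A map is quasi-open iff the image of every nonempty open set has nonempty interior. -/
def IsQuasiOpen {X Y : Type*} [TopologicalSpace X] [TopologicalSpace Y] (f : X → Y) : Prop :=
  ∀ U : Set X, IsOpen U → U.Nonempty → (interior (f '' U)).Nonempty

/-- A π-net Souslin scheme on a space `X`: for every finite sequence `a`, the family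
`{V b : b ⊒ a}` is a π-net for the subspace `V a` of `X` (whose nonempty open sets are
exactly the nonempty sets `U ∩ V a` with `U` open in `X`). -/
def IsPiNetScheme {X : Type*} [TopologicalSpace X] (V : List ℕ → Set X) : Prop :=
  ∀ a : List ℕ,
    (∀ b : List ℕ, a <+: b → (V b).Nonempty) ∧
    ∀ U : Set X, IsOpen U → (U ∩ V a).Nonempty → ∃ b : List ℕ, a <+: b ∧ V b ⊆ U ∩ V a

/-- A π-base Souslin scheme on a space is an open π-net Souslin scheme. -/
def IsPiBaseScheme {X : Type*} [TopologicalSpace X] (V : List ℕ → Set X) : Prop :=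
  OpenScheme V ∧ IsPiNetScheme V

/-- A selector on a Souslin scheme `V`: a surjection of the Baire space onto `flesh V`
such that every fiber `f⁻¹(x)` is a dense subset of the subspace `branches V x` of the
Baire space. -/
def IsSelector {X : Type*} (V : List ℕ → Set X) (f : (ℕ → ℕ) → X) : Prop :=
  Set.range f = flesh V ∧
  ∀ x ∈ flesh V, f ⁻¹' {x} ⊆ branches V x ∧ branches V x ⊆ closure (f ⁻¹' {x})

/-- The topology `σ_{τ,f}` on the Baire space, generated by the subbase consisting of the
`τ`-preimages under `f` together with the basic sets `S_a`. -/
def sigmaTop {X : Type*} [TopologicalSpace X] (f : (ℕ → ℕ) → X) :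
    TopologicalSpace (ℕ → ℕ) :=
  TopologicalSpace.generateFrom
    ({S : Set (ℕ → ℕ) | ∃ U : Set X, IsOpen U ∧ S = f ⁻¹' U} ∪
      {S : Set (ℕ → ℕ) | ∃ a : List ℕ, S = cyl a})

/-- The Souslin scheme `V^g`, where `V^g_a = V_{g ∘ a}`. -/
def schemeComp {X : Type*} (V : List ℕ → Set X) (g : ℕ → ℕ) : List ℕ → Set X :=
  fun a => V (a.map g)

/-- A subset of the Baire space is dense-in-itself iff it has no isolated points. -/
def DenseInItself (B : Set (ℕ → ℕ)) : Prop :=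
  ∀ q ∈ B, q ∈ closure (B \ {q})

/-- `X` is a continuous open image of a π-space. -/
def IsContinuousOpenImageOfPiSpace (X : Type) [TopologicalSpace X] : Prop :=
  ∃ (Y : Type) (_ : TopologicalSpace Y) (f : Y → X),
    IsPiSpace Y ∧ Continuous f ∧ IsOpenMap f ∧ Function.Surjective f

/-- The topology `τ_N` on the Baire space generated by the sets `U \ A` with `U` open in
the Baire space and `A` nowhere dense in the Baire space. -/
def tauN : TopologicalSpace (ℕ → ℕ) :=
  TopologicalSpace.generateFrom
    {S : Set (ℕ → ℕ) | ∃ U A : Set (ℕ → ℕ), IsOpen U ∧ IsNowhereDense A ∧ S = U \ A}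


/-!
A Lusin π-base is in particular a π-base of the kind required of a π-space, which gives one
direction. For the other, let `V` witness that `Y` is a π-space, `f : Y → X` be the continuous open
surjection and `(B j)` a countable base of `X`. A point `ε` of the Baire space is read as directions
for walking down `V`: even entries choose the next child, while a nonzero odd entry jumps to a node
`s` with `f '' V s ⊆ B j`, which exists below the current node because `{V a}` is a π-base. With
`ψ ε` the image under `f` of the point of the branch walked, `ψ` maps every cylinder onto some
`f '' V s`; so for the topology `sigmaTop ψ`, generated by the cylinders and the `ψ`-preimages of
open sets, `ψ` is continuous, open and surjective. Since each `B j` is tested at arbitrarily deep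
levels, all nonzero children of such a level are mapped into `B j`, and the cylinders form a Lusin
π-base.
-/

section Cylinders

@[simp]
lemma length_restrictSeq (p : ℕ → ℕ) (n : ℕ) : (restrictSeq p n).length = n := by
  simp [restrictSeq]

@[simp]
lemma getElem_restrictSeq (p : ℕ → ℕ) {n i : ℕ} (h : i < (restrictSeq p n).length) :
    (restrictSeq p n)[i] = p i := by
  simp [restrictSeq]

lemma restrictSeq_succ (p : ℕ → ℕ) (n : ℕ) :
    restrictSeq p (n + 1) = restrictSeq p n ++ [p n] := by
  simp [restrictSeq, List.range_succ]

lemma restrictSeq_prefix (p : ℕ → ℕ) {m n : ℕ} (h : m ≤ n) :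
    restrictSeq p m <+: restrictSeq p n := by
  rw [List.prefix_iff_eq_take]
  simp [restrictSeq, ← List.map_take, List.take_range, h]

lemma mem_cyl_iff {p : ℕ → ℕ} {a : List ℕ} : p ∈ cyl a ↔ ∀ i (h : i < a.length), p i = a[i] := by
  refine ⟨fun hp i h => ?_, fun hp => List.ext_getElem (by simp) fun i h _ => ?_⟩
  · have hp : restrictSeq p a.length = a := hp
    simp [← List.getElem_of_eq hp (by simpa using h)]
  · simpa using hp i (by simpa using h)

lemma mem_cyl_restrictSeq (p : ℕ → ℕ) (n : ℕ) : p ∈ cyl (restrictSeq p n) := by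
  simp [mem_cyl_iff]

lemma apply_eq_of_mem_cyl {p q : ℕ → ℕ} {a : List ℕ} (hp : p ∈ cyl a) (hq : q ∈ cyl a) {i : ℕ}
    (hi : i < a.length) : p i = q i :=
  (mem_cyl_iff.mp hp i hi).trans (mem_cyl_iff.mp hq i hi).symm

lemma cyl_anti {a b : List ℕ} (h : a <+: b) : cyl b ⊆ cyl a := fun _ hp =>
  mem_cyl_iff.mpr fun i hi =>
    (mem_cyl_iff.mp hp i (hi.trans_le h.length_le)).trans (h.getElem hi).symm

lemma prefix_of_mem_cyl {p : ℕ → ℕ} {a b : List ℕ} (ha : p ∈ cyl a) (hb : p ∈ cyl b)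
    (h : a.length ≤ b.length) : a <+: b := by
  rw [List.prefix_iff_eq_take, ← hb, ← ha]
  simp [restrictSeq, ← List.map_take, List.take_range, h]

lemma mem_cyl_append_apply {p : ℕ → ℕ} {a : List ℕ} (h : p ∈ cyl a) :
    p ∈ cyl (a ++ [p a.length]) := by
  change restrictSeq p a.length = a at h
  change restrictSeq p (a ++ [p a.length]).length = _
  simp [restrictSeq_succ, h]

lemma cyl_nil : cyl [] = univ := by
  ext p
  simp [cyl, restrictSeq]

lemma cyl_eq_iUnion_append (a : List ℕ) : cyl a = ⋃ n, cyl (a ++ [n]) :=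
  subset_antisymm (fun p hp => mem_iUnion.mpr ⟨p a.length, mem_cyl_append_apply hp⟩)
    (iUnion_subset fun _ => cyl_anti (List.prefix_append _ _))

lemma cyl_append_inter_cyl_append {a : List ℕ} {n m : ℕ} (h : n ≠ m) :
    cyl (a ++ [n]) ∩ cyl (a ++ [m]) = ∅ := by
  refine eq_empty_of_forall_notMem fun p ⟨hn, hm⟩ => h ?_
  simpa using (mem_cyl_iff.mp hn a.length (by simp)).symm.trans
    (mem_cyl_iff.mp hm a.length (by simp))

lemma partitions_cyl : Partitions cyl univ :=
  ⟨⟨cyl_nil, cyl_eq_iUnion_append⟩, fun _ _ _ => cyl_append_inter_cyl_append⟩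

lemma fruit_cyl (p : ℕ → ℕ) : fruit cyl p = {p} := by
  ext q
  simp only [fruit, mem_iInter, mem_singleton_iff]
  refine ⟨fun hq => funext fun i => apply_eq_of_mem_cyl (hq (i + 1)) (mem_cyl_restrictSeq p _)
    (by simp), fun h n => h ▸ mem_cyl_restrictSeq q n⟩

lemma cyl_nonempty (a : List ℕ) : (cyl a).Nonempty :=
  ⟨fun i => a.getD i 0, mem_cyl_iff.mpr fun _ hi => List.getD_eq_getElem a 0 hi⟩

lemma strictBranches_cyl : StrictBranches cyl := fun p => ⟨p, fruit_cyl p⟩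

end Cylinders

section Limits

def limit (L : ℕ → List ℕ) (i : ℕ) : ℕ := (L (i + 1)).getD i 0

lemma limit_mem_cyl {L : ℕ → List ℕ} (hmono : ∀ k, L k <+: L (k + 1))
    (hlen : ∀ k, k ≤ (L k).length) (k : ℕ) : limit L ∈ cyl (L k) := by
  have hchain : ∀ {k l}, k ≤ l → L k <+: L l := fun h =>
    Nat.le_induction (List.prefix_refl _) (fun _ _ ih => ih.trans (hmono _)) _ h
  refine mem_cyl_iff.mpr fun i hi => ?_
  have hi' : i < (L (i + 1)).length := Nat.lt_of_lt_of_le (Nat.lt_succ_self i) (hlen _)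
  rw [limit, List.getD_eq_getElem _ _ hi']
  rcases le_total (i + 1) k with h | h
  · exact (hchain h).getElem hi'
  · exact ((hchain h).getElem hi).symm

lemma exists_mem_cyl_forall_of_extend {Q : List ℕ → Prop} (hQ : ∀ u, Q u → ∃ n, Q (u ++ [n]))
    {a : List ℕ} (ha : Q a) : ∃ p ∈ cyl a, ∀ k, Q (restrictSeq p (a.length + k)) := by
  choose g hg using hQ
  let L : ℕ → {u // Q u} := fun k =>
    Nat.rec ⟨a, ha⟩ (fun _ u => ⟨u.1 ++ [g u.1 u.2], hg u.1 u.2⟩) k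
  have hlen : ∀ k, (L k).1.length = a.length + k := fun k => by
    induction k with
    | zero => rfl
    | succ k ih =>
      change ((L k).1 ++ [_]).length = _
      rw [List.length_append, ih, List.length_singleton, Nat.add_assoc]
  have hmem : ∀ k, limit (fun k => (L k).1) ∈ cyl (L k).1 :=
    limit_mem_cyl (fun _ => List.prefix_append _ _) (fun k => by rw [hlen]; omega)
  refine ⟨_, hmem 0, fun k => ?_⟩
  have : restrictSeq _ (L k).1.length = (L k).1 := hmem k
  rw [hlen] at this
  exact this ▸ (L k).2

end Limits

section SouslinScheme

variable {Y : Type*} {V : List ℕ → Set Y} {s : Set Y}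

lemma Covers.subset_of_prefix (hV : Covers V s) {a b : List ℕ} (h : a <+: b) : V b ⊆ V a := by
  obtain ⟨t, rfl⟩ := h
  induction t using List.reverseRecOn with
  | nil => simp
  | append_singleton t n ih =>
    rw [← List.append_assoc]
    exact (hV.2 (a ++ t) ▸ subset_iUnion (fun n => V (a ++ t ++ [n])) n).trans ih

lemma Covers.mem_fruit_of_forall {p : ℕ → ℕ} {y : Y} (hV : Covers V s) {m : ℕ}
    (h : ∀ k, y ∈ V (restrictSeq p (m + k))) : y ∈ fruit V p :=
  mem_iInter.mpr fun n => hV.subset_of_prefix (restrictSeq_prefix p (Nat.le_add_left n m)) (h n)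

lemma Covers.exists_mem_cyl_mem_fruit (hV : Covers V s) {a : List ℕ} {y : Y} (hy : y ∈ V a) :
    ∃ p ∈ cyl a, y ∈ fruit V p := by
  obtain ⟨p, hp, h⟩ := exists_mem_cyl_forall_of_extend
    (fun u (hu : y ∈ V u) => mem_iUnion.mp (hV.2 u ▸ hu)) hy
  exact ⟨p, hp, hV.mem_fruit_of_forall h⟩

lemma mem_of_mem_fruit {p : ℕ → ℕ} {y : Y} (hy : y ∈ fruit V p) {a : List ℕ} (hp : p ∈ cyl a) :
    y ∈ V a :=
  hp ▸ mem_iInter.mp hy a.length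

lemma Covers.image_cyl (hV : Covers V s) {x : (ℕ → ℕ) → Y} (hx : ∀ p, fruit V p = {x p})
    (a : List ℕ) : x '' cyl a = V a := by
  refine subset_antisymm ?_ fun y hy => ?_
  · rintro _ ⟨p, hp, rfl⟩
    exact mem_of_mem_fruit ((hx p).symm ▸ rfl) hp
  · obtain ⟨p, hp, hyp⟩ := hV.exists_mem_cyl_mem_fruit hy
    exact ⟨p, hp, by simpa [hx p, eq_comm] using hyp⟩

lemma Partitions.eq_of_mem_fruit (hV : Partitions V s) {p q : ℕ → ℕ} {y : Y}
    (hp : y ∈ fruit V p) (hq : y ∈ fruit V q) : p = q := by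
  have hres : ∀ n, restrictSeq p n = restrictSeq q n := fun n => by
    induction n with
    | zero => rfl
    | succ n ih =>
      have h1 : y ∈ V (restrictSeq p n ++ [p n]) := restrictSeq_succ p n ▸ mem_iInter.mp hp (n + 1)
      have h2 : y ∈ V (restrictSeq p n ++ [q n]) := by
        rw [ih, ← restrictSeq_succ]
        exact mem_iInter.mp hq (n + 1)
      have hpq : p n = q n := by
        by_contra hpq
        simpa [hV.2 _ _ _ hpq] using mem_inter h1 h2
      rw [restrictSeq_succ, restrictSeq_succ, ih, hpq]
  funext i
  simpa using congrArg (·[i]?) (hres (i + 1))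

lemma Partitions.exists_prefix_subset [TopologicalSpace Y]
    (hV : Partitions V univ) (hπ : IsPiBase {S : Set Y | ∃ a, S = V a}) {U : Set Y}
    (hU : IsOpen U) {a : List ℕ} (hne : (U ∩ V a).Nonempty) : ∃ b, a <+: b ∧ V b ⊆ U := by
  obtain ⟨_, ⟨c, rfl⟩, hc⟩ := hπ.2 _ (hU.inter (hπ.1 _ ⟨a, rfl⟩).1) hne
  obtain ⟨y, hy⟩ := (hπ.1 _ ⟨c, rfl⟩).2
  obtain ⟨p, hpc, hyp⟩ := hV.1.exists_mem_cyl_mem_fruit hy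
  obtain ⟨q, hqa, hyq⟩ := hV.1.exists_mem_cyl_mem_fruit (hc hy).2
  obtain rfl := hV.eq_of_mem_fruit hyp hyq
  have hb := mem_cyl_restrictSeq p (max a.length c.length)
  refine ⟨_, prefix_of_mem_cyl hqa hb (by simp), ?_⟩
  exact (hV.1.subset_of_prefix (prefix_of_mem_cyl hpc hb (by simp))).trans
    (hc.trans inter_subset_left)

end SouslinScheme

section Follow

variable (P : ℕ → List ℕ → Prop)

/- Every `j` is `(d / 2).unpair.1` for infinitely many odd `d`, so each `P j` is tried at
arbitrarily deep levels. -/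
open Classical in
noncomputable def jumpStep (d : ℕ) (c : List ℕ) (n : ℕ) : List ℕ :=
  if Even d then c ++ [n]
  else if h : n ≠ 0 ∧ ∃ s, c <+: s ∧ P (d / 2).unpair.1 s then h.2.choose else c

noncomputable def code (a : List ℕ) : List ℕ :=
  a.zipIdx.foldl (fun c x => jumpStep P x.2 c x.1) []

/- `code` grows at every even level, so the `k`-th list has length at least `k`. -/
noncomputable def follow (ε : ℕ → ℕ) : ℕ → ℕ :=
  limit fun k => code P (restrictSeq ε (2 * k))

variable {P}

@[simp]
lemma code_nil : code P [] = [] := rfl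

lemma code_append (a : List ℕ) (n : ℕ) :
    code P (a ++ [n]) = jumpStep P a.length (code P a) n := by
  simp [code, List.zipIdx_append, List.foldl_append]

lemma prefix_jumpStep (d : ℕ) (c : List ℕ) (n : ℕ) : c <+: jumpStep P d c n := by
  unfold jumpStep
  split_ifs with _ h
  · exact List.prefix_append _ _
  · exact h.2.choose_spec.1
  · exact List.prefix_refl _

lemma jumpStep_of_even {d : ℕ} (hd : Even d) (c : List ℕ) (n : ℕ) :
    jumpStep P d c n = c ++ [n] :=
  if_pos hd

lemma jumpStep_zero_of_not_even {d : ℕ} (hd : ¬Even d) (c : List ℕ) : jumpStep P d c 0 = c := by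
  simp [jumpStep, hd]

lemma jumpStep_spec {d n : ℕ} {c : List ℕ} (hd : ¬Even d) (hn : n ≠ 0)
    (h : ∃ s, c <+: s ∧ P (d / 2).unpair.1 s) : P (d / 2).unpair.1 (jumpStep P d c n) := by
  rw [jumpStep, if_neg hd, dif_pos ⟨hn, h⟩]
  exact h.choose_spec.2

lemma code_mono {a b : List ℕ} (h : a <+: b) : code P a <+: code P b := by
  obtain ⟨t, rfl⟩ := h
  induction t using List.reverseRecOn with
  | nil => simp
  | append_singleton t n ih =>
    rw [← List.append_assoc, code_append]
    exact ih.trans (prefix_jumpStep _ _ _)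

lemma length_code (a : List ℕ) : (a.length + 1) / 2 ≤ (code P a).length := by
  induction a using List.reverseRecOn with
  | nil => simp
  | append_singleton a n ih =>
    rw [code_append, List.length_append, List.length_singleton]
    by_cases hd : Even a.length
    · rw [jumpStep_of_even hd, List.length_append, List.length_singleton]
      omega
    · have := (prefix_jumpStep (P := P) a.length (code P a) n).length_le
      rw [Nat.not_even_iff_odd, Nat.odd_iff] at hd
      omega

lemma follow_mem_cyl_code (ε : ℕ → ℕ) (d : ℕ) : follow P ε ∈ cyl (code P (restrictSeq ε d)) := by
  have hmono (k) : code P (restrictSeq ε (2 * k)) <+: code P (restrictSeq ε (2 * (k + 1))) :=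
    code_mono (restrictSeq_prefix ε (by omega))
  have hlen (k) : k ≤ (code P (restrictSeq ε (2 * k))).length := by
    have := length_code (P := P) (restrictSeq ε (2 * k))
    rw [length_restrictSeq] at this
    omega
  exact cyl_anti (code_mono (restrictSeq_prefix ε (by omega))) (limit_mem_cyl hmono hlen d)

lemma exists_append_mem_cyl_code {p : ℕ → ℕ} {u : List ℕ} (h : p ∈ cyl (code P u)) :
    ∃ n, p ∈ cyl (code P (u ++ [n])) := by
  by_cases hd : Even u.length
  · exact ⟨_, by rw [code_append, jumpStep_of_even hd]; exact mem_cyl_append_apply h⟩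
  · exact ⟨0, by rwa [code_append, jumpStep_zero_of_not_even hd]⟩

lemma image_follow_cyl (e : List ℕ) : follow P '' cyl e = cyl (code P e) := by
  refine subset_antisymm ?_ fun p hp => ?_
  · rintro _ ⟨ε, hε, rfl⟩
    exact hε ▸ follow_mem_cyl_code ε e.length
  obtain ⟨ε, hε, hεp⟩ := exists_mem_cyl_forall_of_extend
    (Q := fun u => p ∈ cyl (code P u)) (fun _ => exists_append_mem_cyl_code) hp
  refine ⟨ε, hε, funext fun i => apply_eq_of_mem_cyl (follow_mem_cyl_code ε _) (hεp (2 * i + 2)) ?_⟩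
  have := length_code (P := P) (restrictSeq ε (e.length + (2 * i + 2)))
  rw [length_restrictSeq] at this
  omega

end Follow

lemma Covers.image_comp_follow_cyl {Y : Type*} {V : List ℕ → Set Y} {s : Set Y} {x : (ℕ → ℕ) → Y}
    (hV : Covers V s) (hx : ∀ p, fruit V p = {x p})
    (P : ℕ → List ℕ → Prop) (a : List ℕ) : (x ∘ follow P) '' cyl a = V (code P a) := by
  rw [image_comp, image_follow_cyl, hV.image_cyl hx]

section SigmaTop

variable {X : Type*} [TopologicalSpace X] {ψ : (ℕ → ℕ) → X}

lemma isOpen_cyl_sigmaTop (a : List ℕ) : IsOpen[sigmaTop ψ] (cyl a) :=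
  TopologicalSpace.GenerateOpen.basic _ (Or.inr ⟨a, rfl⟩)

lemma continuous_sigmaTop : Continuous[sigmaTop ψ, ‹_›] ψ :=
  continuous_def.mpr fun G hG => TopologicalSpace.GenerateOpen.basic _ (Or.inl ⟨G, hG, rfl⟩)

lemma exists_preimage_inter_cyl_subset {U : Set (ℕ → ℕ)} (hU : IsOpen[sigmaTop ψ] U)
    {ε : ℕ → ℕ} (hε : ε ∈ U) :
    ∃ G, IsOpen G ∧ ψ ε ∈ G ∧ ∃ n, ψ ⁻¹' G ∩ cyl (restrictSeq ε n) ⊆ U := by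
  induction hU generalizing ε with
  | basic S hS =>
    rcases hS with ⟨G, hG, rfl⟩ | ⟨a, rfl⟩
    · exact ⟨G, hG, hε, 0, inter_subset_left⟩
    · have hεa : restrictSeq ε a.length = a := hε
      refine ⟨univ, isOpen_univ, trivial, a.length, ?_⟩
      rw [hεa]
      exact inter_subset_right
  | univ => exact ⟨univ, isOpen_univ, trivial, 0, subset_univ _⟩
  | inter S T _ _ ihS ihT =>
    obtain ⟨G, hG, hεG, m, hm⟩ := ihS hε.1
    obtain ⟨H, hH, hεH, n, hn⟩ := ihT hε.2
    refine ⟨G ∩ H, hG.inter hH, ⟨hεG, hεH⟩, max m n,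
      fun q ⟨hq, hqc⟩ => ⟨hm ⟨hq.1, ?_⟩, hn ⟨hq.2, ?_⟩⟩⟩
    · exact cyl_anti (restrictSeq_prefix ε (le_max_left m n)) hqc
    · exact cyl_anti (restrictSeq_prefix ε (le_max_right m n)) hqc
  | sUnion 𝒮 _ ih =>
    obtain ⟨S, hS, hεS⟩ := hε
    obtain ⟨G, hG, hεG, n, hn⟩ := ih S hS hεS
    exact ⟨G, hG, hεG, n, hn.trans (subset_sUnion_of_mem hS)⟩

lemma isOpenMap_sigmaTop (h : ∀ a, IsOpen (ψ '' cyl a)) : @IsOpenMap _ _ (sigmaTop ψ) _ ψ := by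
  intro U hU
  refine isOpen_iff_mem_nhds.mpr ?_
  rintro _ ⟨ε, hε, rfl⟩
  obtain ⟨G, hG, hεG, n, hn⟩ := exists_preimage_inter_cyl_subset hU hε
  refine Filter.mem_of_superset
    ((hG.inter (h _)).mem_nhds ⟨hεG, ε, mem_cyl_restrictSeq ε n, rfl⟩) ?_
  rintro _ ⟨hyG, ε', hε', rfl⟩
  exact ⟨ε', hn ⟨hyG, hε'⟩, rfl⟩

lemma isLusinPiBase_cyl
    (h : ∀ ε, ∀ G ∈ 𝓝 (ψ ε), ∀ m, ∃ d ≥ m, ∃ n, ∀ i ≥ n, ψ '' cyl (restrictSeq ε d ++ [i]) ⊆ G) :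
    @IsLusinPiBase _ (sigmaTop ψ) cyl := by
  refine ⟨isOpen_cyl_sigmaTop, partitions_cyl, strictBranches_cyl, fun ε U hU hε => ?_⟩
  obtain ⟨G, hG, hεG, m, hm⟩ := exists_preimage_inter_cyl_subset hU hε
  obtain ⟨d, hdm, n, hn⟩ := h ε G (hG.mem_nhds hεG) m
  refine ⟨restrictSeq ε d, n, mem_cyl_restrictSeq ε d, iUnion₂_subset fun i hi q hq => hm ⟨?_, ?_⟩⟩
  · exact image_subset_iff.mp (hn i hi) hq
  · exact cyl_anti ((restrictSeq_prefix ε hdm).trans (List.prefix_append _ _)) hq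

end SigmaTop

lemma IsLusinPiBase.isPiSpace {Y : Type*} [TopologicalSpace Y] {V : List ℕ → Set Y}
    (hV : IsLusinPiBase V) : IsPiSpace Y := by
  obtain ⟨hO, hP, hS, hL⟩ := hV
  refine ⟨V, hO, hP, hS, ?_, ?_⟩
  · rintro _ ⟨a, rfl⟩
    obtain ⟨p, hp⟩ := cyl_nonempty a
    obtain ⟨y, hy⟩ := hS p
    exact ⟨hO a, y, mem_of_mem_fruit (hy ▸ rfl) hp⟩
  · rintro U hU ⟨y, hy⟩
    obtain ⟨a, n, -, hsub⟩ := hL y U hU hy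
    exact ⟨_, ⟨a ++ [n], rfl⟩, (subset_iUnion₂_of_subset n le_rfl subset_rfl).trans hsub⟩

lemma exists_nat_indexed_open_basis (X : Type*) [TopologicalSpace X] [SecondCountableTopology X] :
    ∃ B : ℕ → Set X, ∀ y, ∀ G ∈ 𝓝 y, ∃ j, IsOpen (B j) ∧ y ∈ B j ∧ B j ⊆ G := by
  obtain ⟨b, hbc, -, hb⟩ := TopologicalSpace.exists_countable_basis X
  obtain ⟨B, hB⟩ := Set.countable_iff_exists_subset_range.mp hbc
  refine ⟨B, fun y G hG => ?_⟩
  obtain ⟨_, hv, hyv, hvG⟩ := hb.mem_nhds_iff.mp hG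
  obtain ⟨j, rfl⟩ := hB hv
  exact ⟨j, hb.isOpen hv, hyv, hvG⟩

section PiSpaceImage

variable {X Y : Type*} [TopologicalSpace X] [TopologicalSpace Y] {V : List ℕ → Set Y}
  {x : (ℕ → ℕ) → Y}

lemma Partitions.exists_image_cyl_append_subset (hV : Partitions V univ)
    (hπ : IsPiBase {S : Set Y | ∃ a, S = V a}) (hx : ∀ p, fruit V p = {x p}) {f : Y → X}
    (hf : Continuous f) {B : ℕ → Set X}
    (hB : ∀ y, ∀ G ∈ 𝓝 y, ∃ j, IsOpen (B j) ∧ y ∈ B j ∧ B j ⊆ G) (ε : ℕ → ℕ) (G : Set X)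
    (hG : G ∈ 𝓝 ((f ∘ x ∘ follow fun j s => V s ⊆ f ⁻¹' B j) ε)) (m : ℕ) :
    ∃ d ≥ m, ∃ n, ∀ i ≥ n,
      (f ∘ x ∘ follow fun j s => V s ⊆ f ⁻¹' B j) '' cyl (restrictSeq ε d ++ [i]) ⊆ G := by
  set P : ℕ → List ℕ → Prop := fun j s => V s ⊆ f ⁻¹' B j
  obtain ⟨j, hBj, hεB, hBG⟩ := hB _ G hG
  set d := 2 * Nat.pair j m + 1
  have hd : ¬Even d := by simp [d]
  have hdj : (d / 2).unpair.1 = j := by simp [d, Nat.add_div_of_dvd_right]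
  have hjump : ∃ s, code P (restrictSeq ε d) <+: s ∧ P (d / 2).unpair.1 s :=
    hdj ▸ hV.exists_prefix_subset hπ (hBj.preimage hf)
      ⟨x (follow P ε), hεB, mem_of_mem_fruit ((hx _).symm ▸ rfl) (follow_mem_cyl_code ε d)⟩
  refine ⟨d, (Nat.right_le_pair j m).trans (by omega), 1, fun i hi => ?_⟩
  rw [image_comp, hV.1.image_comp_follow_cyl hx, code_append, length_restrictSeq,
    image_subset_iff]
  have hP := jumpStep_spec hd (by omega : i ≠ 0) hjump
  rw [hdj] at hP
  exact hP.trans (preimage_mono hBG)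

end PiSpaceImage

theorem statement10_general {X : Type} [TopologicalSpace X] [SecondCountableTopology X] :
    IsContinuousOpenImageOfPiSpace X ↔
    ∃ (Y : Type) (_ : TopologicalSpace Y) (f : Y → X),
      (∃ V : List ℕ → Set Y, IsLusinPiBase V) ∧
      Continuous f ∧ IsOpenMap f ∧ Function.Surjective f := by
  constructor
  · rintro ⟨Y, _, f, ⟨V, hO, hP, hS, hπ⟩, hfc, hfo, hfs⟩
    obtain ⟨B, hB⟩ := exists_nat_indexed_open_basis X
    choose x hx using hS
    set P : ℕ → List ℕ → Prop := fun j s => V s ⊆ f ⁻¹' B j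
    set ψ := f ∘ x ∘ follow P
    have himage (a : List ℕ) : ψ '' cyl a = f '' V (code P a) := by
      rw [image_comp, hP.1.image_comp_follow_cyl hx]
    refine ⟨ℕ → ℕ, sigmaTop ψ, ψ,
      ⟨cyl, isLusinPiBase_cyl (hP.exists_image_cyl_append_subset hπ hx hfc hB)⟩,
      continuous_sigmaTop, isOpenMap_sigmaTop fun a => ?_, ?_⟩
    · rw [himage]
      exact hfo _ (hO _)
    · rw [← range_eq_univ, ← image_univ, ← cyl_nil, himage, code_nil, hP.1.1, image_univ,
        hfs.range_eq]
  · rintro ⟨Y, _, f, ⟨V, hV⟩, hfc, hfo, hfs⟩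
    exact ⟨Y, _, f, hV.isPiSpace, hfc, hfo, hfs⟩

/-- A nonempty second-countable space is a continuous open image of a
π-space iff it is a continuous open image of a space with a Lusin π-base. -/
theorem statement10 {X : Type} [TopologicalSpace X] [SecondCountableTopology X]
    [Nonempty X] :
    IsContinuousOpenImageOfPiSpace X ↔
    ∃ (Y : Type) (_ : TopologicalSpace Y) (f : Y → X),
      (∃ V : List ℕ → Set Y, IsLusinPiBase V) ∧
      Continuous f ∧ IsOpenMap f ∧ Function.Surjective f :=
  statement10_general
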